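/- Let F : [0,1]^n → ℝ_{≥0} be a monotone one-sided σ-smooth C² function and P ⊆ [0,1]^n a downward-closed compact convex polytope. Let v* ∈ argmax_{x∈P} ‖x‖₁ and OPT = max_{x∈P} F(x), and let α ∈ (0,1). Then for any x ∈ P with x ≥ α·v*, one has max_{v∈P} vᵀ∇F(x) ≥ (α/(α+1))^{2σ}·(OPT − F(x)). -/

import Mathlib

open scoped BigOperators

/-- The gradient of `F` at `x`: vector of partial derivatives. -/
noncomputable def grad {n : ℕ} (F : (Fin n → ℝ) → ℝ) (x : Fin n → ℝ) : Fin n → ℝ :=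
  fun i => fderiv ℝ F x (Pi.single i 1)

/-- The Hessian of `F` at `x`: matrix of second partial derivatives. -/
noncomputable def hess {n : ℕ} (F : (Fin n → ℝ) → ℝ) (x : Fin n → ℝ) : Fin n → Fin n → ℝ :=
  fun i j => fderiv ℝ (fun y => grad F y i) x (Pi.single j 1)

/-- Euclidean dot product `uᵀ v`. -/
noncomputable def dotp {n : ℕ} (u v : Fin n → ℝ) : ℝ := ∑ i, u i * v i

/-- The ℓ¹ norm `‖x‖₁`. -/
noncomputable def l1 {n : ℕ} (x : Fin n → ℝ) : ℝ := ∑ i, |x i|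

/-- The quadratic form `uᵀ H u`. -/
noncomputable def quadForm {n : ℕ} (H : Fin n → Fin n → ℝ) (u : Fin n → ℝ) : ℝ :=
  ∑ i, ∑ j, u i * H i j * u j

/-- The unit box `[0,1]^n`. -/
def box (n : ℕ) : Set (Fin n → ℝ) := Set.Icc 0 1

/-- `F` is one-sided σ-smooth at `x`:
`(1/2)·uᵀ∇²F(x)u ≤ σ·(‖u‖₁/‖x‖₁)·uᵀ∇F(x)` for all `u ≥ 0`. -/
def OSSAt {n : ℕ} (σ : ℝ) (F : (Fin n → ℝ) → ℝ) (x : Fin n → ℝ) : Prop :=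
  ∀ u : Fin n → ℝ, 0 ≤ u →
    (1 / 2 : ℝ) * quadForm (hess F x) u ≤ σ * (l1 u / l1 x) * dotp u (grad F x)

/-! helper lemmas -/


lemma l1_eq_sum {n : ℕ} {x : Fin n → ℝ} (hx : 0 ≤ x) : l1 x = ∑ i, x i := by
  unfold l1
  exact Finset.sum_congr rfl fun i _ => abs_of_nonneg (hx i)

lemma l1_nonneg {n : ℕ} (x : Fin n → ℝ) : 0 ≤ l1 x :=
  Finset.sum_nonneg fun i _ => abs_nonneg _

lemma l1_pos {n : ℕ} {x : Fin n → ℝ} (hx0 : x ≠ 0) : 0 < l1 x := by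
  rcases (l1_nonneg x).lt_or_eq with h | h
  · exact h
  · exfalso
    apply hx0
    funext i
    have := (Finset.sum_eq_zero_iff_of_nonneg (fun i _ => abs_nonneg (x i))).mp h.symm i
      (Finset.mem_univ i)
    simpa [abs_eq_zero] using this

lemma l1_mono {n : ℕ} {u v : Fin n → ℝ} (hu : 0 ≤ u) (huv : u ≤ v) : l1 u ≤ l1 v := by
  have hv : 0 ≤ v := le_trans hu huv
  rw [l1_eq_sum hu, l1_eq_sum hv]
  exact Finset.sum_le_sum fun i _ => huv i

lemma apply_eq_sum {n : ℕ} (T : (Fin n → ℝ) →L[ℝ] ℝ) (u : Fin n → ℝ) :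
    T u = ∑ j, u j * T (Pi.single j 1) := by
  have hu : u = ∑ j, u j • (Pi.single j 1 : Fin n → ℝ) := by
    funext k
    simp [Pi.single_apply, Finset.sum_apply]
  conv_lhs => rw [hu]
  rw [map_sum]
  simp [smul_eq_mul]

lemma line_hasDerivAt {n : ℕ} (x u : Fin n → ℝ) (t : ℝ) :
    HasDerivAt (fun s : ℝ => x + s • u) u t := by
  simpa using ((hasDerivAt_id t).smul_const u).const_add x

lemma hasDerivAt_F_line {n : ℕ} {F : (Fin n → ℝ) → ℝ} (hF : Differentiable ℝ F)
    (x u : Fin n → ℝ) (t : ℝ) :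
    HasDerivAt (fun s : ℝ => F (x + s • u)) (dotp u (grad F (x + t • u))) t := by
  have h1 := ((hF (x + t • u)).hasFDerivAt).comp_hasDerivAt t (line_hasDerivAt x u t)
  have : fderiv ℝ F (x + t • u) u = dotp u (grad F (x + t • u)) := by
    rw [apply_eq_sum]; rfl
  rwa [this] at h1

lemma grad_differentiable {n : ℕ} {F : (Fin n → ℝ) → ℝ} (hF : ContDiff ℝ 2 F) (i : Fin n) :
    Differentiable ℝ (fun y => grad F y i) := by
  have h1 : ContDiff ℝ 1 (fderiv ℝ F) := hF.fderiv_right (by norm_num)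
  have h2 : Differentiable ℝ (fderiv ℝ F) := h1.differentiable (by norm_num)
  exact (ContinuousLinearMap.apply ℝ ℝ (Pi.single i 1 : Fin n → ℝ)).differentiable.comp h2

lemma hasDerivAt_grad_line {n : ℕ} {F : (Fin n → ℝ) → ℝ} (hF : ContDiff ℝ 2 F)
    (x u : Fin n → ℝ) (t : ℝ) (i : Fin n) :
    HasDerivAt (fun s : ℝ => grad F (x + s • u) i)
      (∑ j, u j * hess F (x + t • u) i j) t := by
  have hd := grad_differentiable hF i
  have h1 := ((hd (x + t • u)).hasFDerivAt).comp_hasDerivAt t (line_hasDerivAt x u t)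
  have : fderiv ℝ (fun y => grad F y i) (x + t • u) u
      = ∑ j, u j * hess F (x + t • u) i j := by
    rw [apply_eq_sum]; rfl
  rwa [this] at h1

lemma hasDerivAt_G {n : ℕ} {F : (Fin n → ℝ) → ℝ} (hF : ContDiff ℝ 2 F)
    (x u : Fin n → ℝ) (t : ℝ) :
    HasDerivAt (fun s : ℝ => dotp u (grad F (x + s • u)))
      (quadForm (hess F (x + t • u)) u) t := by
  have h : ∀ s : ℝ, dotp u (grad F (x + s • u)) = ∑ i, u i * grad F (x + s • u) i := fun s => rfl
  have h2 : HasDerivAt (fun s : ℝ => ∑ i, u i * grad F (x + s • u) i)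
      (∑ i, u i * ∑ j, u j * hess F (x + t • u) i j) t := by
    apply HasDerivAt.fun_sum
    intro i _
    exact (hasDerivAt_grad_line hF x u t i).const_mul (u i)
  have h3 : (∑ i, u i * ∑ j, u j * hess F (x + t • u) i j)
      = quadForm (hess F (x + t • u)) u := by
    unfold quadForm
    apply Finset.sum_congr rfl
    intro i _
    rw [Finset.mul_sum]
    apply Finset.sum_congr rfl
    intro j _
    ring
  simpa [h, h3] using h2

lemma grad_nonneg_of_mono {n : ℕ} {F : (Fin n → ℝ) → ℝ} (hF : Differentiable ℝ F)
    (hmono : ∀ y ∈ box n, ∀ z ∈ box n, y ≤ z → F y ≤ F z)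
    {y : Fin n → ℝ} (hy : y ∈ box n) {i : Fin n} (hyi : y i < 1) :
    0 ≤ grad F y i := by
  set f : ℝ → ℝ := fun s => F (y + s • (Pi.single i 1 : Fin n → ℝ)) with hf
  have hder : HasDerivAt f (grad F y i) 0 := by
    have h1 := ((hF (y + (0:ℝ) • (Pi.single i 1 : Fin n → ℝ))).hasFDerivAt).comp_hasDerivAt 0
      (line_hasDerivAt y (Pi.single i 1) 0)
    simp only [zero_smul, add_zero] at h1
    exact h1
  have hslope := hasDerivAt_iff_tendsto_slope.mp hder
  have hslope' : Filter.Tendsto (slope f 0) (nhdsWithin 0 (Set.Ioi 0)) (nhds (grad F y i)) :=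
    hslope.mono_left (nhdsWithin_mono 0 (fun s hs => ne_of_gt hs))
  refine ge_of_tendsto hslope' ?_
  have hmem : Set.Ioo (0:ℝ) (1 - y i) ∈ nhdsWithin (0:ℝ) (Set.Ioi 0) :=
    Ioo_mem_nhdsGT_of_mem (by constructor <;> [rfl; linarith])
  filter_upwards [hmem] with s hs
  have hs0 : (0:ℝ) < s := hs.1
  have h0 : ∀ j, 0 ≤ y j := fun j => hy.1 j
  have h1 : ∀ j, y j ≤ 1 := fun j => hy.2 j
  have hmemz : y + s • (Pi.single i 1 : Fin n → ℝ) ∈ box n := by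
    constructor
    · intro j
      by_cases hj : j = i
      · subst hj
        simp only [Pi.add_apply, Pi.smul_apply, Pi.single_eq_same, smul_eq_mul, mul_one,
          Pi.zero_apply, Pi.one_apply]
        have := h0 j; linarith
      · simpa [Pi.single_apply, hj] using h0 j
    · intro j
      by_cases hj : j = i
      · subst hj
        simp only [Pi.add_apply, Pi.smul_apply, Pi.single_eq_same, smul_eq_mul, mul_one,
          Pi.zero_apply, Pi.one_apply]
        have := hs.2; linarith
      · simpa [Pi.single_apply, hj] using h1 j
  have hle : y ≤ y + s • (Pi.single i 1 : Fin n → ℝ) := by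
    intro j
    by_cases hj : j = i
    · subst hj
      simp only [Pi.add_apply, Pi.smul_apply, Pi.single_eq_same, smul_eq_mul, mul_one,
        Pi.zero_apply, Pi.one_apply]
      linarith
    · simp [Pi.single_apply, hj]
  have hFle : F y ≤ f s := hmono y hy _ hmemz hle
  have hsl : slope f 0 s = (f s - f 0) / s := by
    simp [slope_def_field]
  rw [hsl]
  have hf0 : f 0 = F y := by simp [hf]
  apply div_nonneg _ hs0.le
  rw [hf0]; linarith

lemma phi_hasDerivAt (σ L M : ℝ) (hL : 0 < L) (hM : 0 ≤ M) {t : ℝ} (ht : 0 ≤ t) :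
    HasDerivAt (fun s : ℝ => ((L + s * M) / L) ^ (2*σ))
      (2*σ*M/(L + t*M) * ((L + t*M)/L) ^ (2*σ)) t := by
  have hb : (0:ℝ) < L + t * M := by nlinarith
  have hbt : (0:ℝ) < (L + t*M)/L := div_pos hb hL
  have h1 : HasDerivAt (fun s : ℝ => (L + s * M) / L) (M / L) t := by
    simpa [mul_comm] using (((hasDerivAt_id t).const_mul M).const_add L).div_const L
  have h2 := h1.rpow_const (p := 2*σ) (Or.inl (ne_of_gt hbt))
  convert h2 using 1
  rw [Real.rpow_sub hbt, Real.rpow_one]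
  field_simp

lemma gronwall_bound (σ L M : ℝ) (hL : 0 < L) (hM : 0 ≤ M)
    (G G' : ℝ → ℝ) (hG : ∀ t ∈ Set.Icc (0:ℝ) 1, HasDerivAt G (G' t) t)
    (hineq : ∀ t ∈ Set.Ioo (0:ℝ) 1, G' t ≤ 2*σ*M/(L+t*M) * G t) :
    ∀ t ∈ Set.Icc (0:ℝ) 1, G t ≤ G 0 * ((L + t*M)/L) ^ (2*σ) := by
  set φ : ℝ → ℝ := fun s => ((L + s * M) / L) ^ (2*σ) with hφdef
  have hφpos : ∀ t : ℝ, 0 ≤ t → 0 < φ t := by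
    intro t ht
    have hb : (0:ℝ) < (L + t*M)/L := div_pos (by nlinarith) hL
    exact Real.rpow_pos_of_pos hb _
  set h : ℝ → ℝ := fun s => G s / φ s with hhdef
  have hder : ∀ t ∈ Set.Icc (0:ℝ) 1, HasDerivAt h
      ((G' t * φ t - G t * (2*σ*M/(L + t*M) * φ t)) / (φ t)^2) t := by
    intro t ht
    exact (hG t ht).div (phi_hasDerivAt σ L M hL hM ht.1) (ne_of_gt (hφpos t ht.1))
  have hanti : AntitoneOn h (Set.Icc (0:ℝ) 1) := by
    apply antitoneOn_of_deriv_nonpos (convex_Icc 0 1)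
    · intro t ht
      exact ((hder t ht).continuousAt).continuousWithinAt
    · intro t ht
      rw [interior_Icc] at ht
      exact ((hder t (Set.mem_Icc_of_Ioo ht)).differentiableAt).differentiableWithinAt
    · intro t ht
      rw [interior_Icc] at ht
      rw [(hder t (Set.mem_Icc_of_Ioo ht)).deriv]
      apply div_nonpos_of_nonpos_of_nonneg _ (sq_nonneg _)
      have h1 := hineq t ht
      have h2 : 0 < φ t := hφpos t ht.1.le
      nlinarith
  intro t ht
  have h0 : h t ≤ h 0 := hanti (Set.left_mem_Icc.mpr zero_le_one) ht ht.1
  have hφ0 : φ 0 = 1 := by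
    simp [hφdef, div_self (ne_of_gt hL)]
  have hφt : 0 < φ t := hφpos t ht.1
  rw [hhdef] at h0
  simp only [hφ0, div_one] at h0
  calc G t = G t / φ t * φ t := by field_simp
  _ ≤ G 0 * φ t := mul_le_mul_of_nonneg_right h0 hφt.le


/-- first part of Lemma 3.1: key gradient-progress bound for σ-OSS
functions.  Let `F : [0,1]^n → ℝ≥0` be monotone and one-sided σ-smooth, `P` a
downward-closed compact convex polytope in `[0,1]^n`, `v* ∈ argmax_{x∈P} ‖x‖₁`,
`OPT = max_{x∈P} F(x)`, and `α ∈ (0,1)`.  Then for any `x ∈ P` with `x ≥ α·v*`,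
`max_{v∈P} vᵀ∇F(x) ≥ (α/(α+1))^(2σ)·(OPT - F(x))`. -/

theorem stmt4 {n : ℕ} (σ α : ℝ) (hσ : 0 ≤ σ) (hα : α ∈ Set.Ioo (0 : ℝ) 1)
    (F : (Fin n → ℝ) → ℝ) (hF : ContDiff ℝ 2 F)
    (hFnn : ∀ y ∈ box n, 0 ≤ F y)
    (hmono : ∀ y ∈ box n, ∀ z ∈ box n, y ≤ z → F y ≤ F z)
    (hOSS : ∀ y ∈ box n, y ≠ 0 → OSSAt σ F y)
    (P : Set (Fin n → ℝ)) (hPbox : P ⊆ box n) (hPconv : Convex ℝ P)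
    (hPcomp : IsCompact P)
    (hPdc : ∀ y ∈ P, ∀ z : Fin n → ℝ, 0 ≤ z → z ≤ y → z ∈ P)
    (vstar : Fin n → ℝ) (hvP : vstar ∈ P) (hvmax : ∀ y ∈ P, l1 y ≤ l1 vstar)
    (xopt : Fin n → ℝ) (hoptP : xopt ∈ P) (hopt : ∀ y ∈ P, F y ≤ F xopt)
    (x : Fin n → ℝ) (hxP : x ∈ P) (hxge : α • vstar ≤ x) :
    ∃ v ∈ P, (α / (α + 1)) ^ (2 * σ) * (F xopt - F x) ≤ dotp v (grad F x) := by
  obtain ⟨hα0, hα1⟩ := hα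
  have hFd : Differentiable ℝ F := hF.differentiable (by norm_num)
  have hxbox := hPbox hxP
  have hoptbox := hPbox hoptP
  have hvbox := hPbox hvP
  have hx0le : ∀ i, 0 ≤ x i := fun i => hxbox.1 i
  have hopt0le : ∀ i, 0 ≤ xopt i := fun i => hoptbox.1 i
  have hopt1le : ∀ i, xopt i ≤ 1 := fun i => hoptbox.2 i
  by_cases hx0 : x = 0
  · -- degenerate case: x = 0 forces everything to be 0
    have hv0 : vstar = 0 := by
      funext i
      have h1 : α * vstar i ≤ x i := hxge i
      have h2 : 0 ≤ vstar i := hvbox.1 i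
      have h3 : x i = 0 := by rw [hx0]; rfl
      simp only [Pi.zero_apply]
      nlinarith
    have hxopt0 : xopt = 0 := by
      by_contra h
      have := l1_pos h
      have h2 := hvmax xopt hoptP
      rw [hv0] at h2
      simp [l1] at this h2
      linarith
    refine ⟨x, hxP, ?_⟩
    rw [hxopt0, hx0]
    simp [dotp]
  · -- main case
    set L := l1 x with hL
    have hLpos : 0 < L := l1_pos hx0
    set z : Fin n → ℝ := fun i => max (x i) (xopt i) with hz
    set u : Fin n → ℝ := fun i => z i - x i with hu
    have hu0 : 0 ≤ u := fun i => by simp [hu, hz, le_max_left]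
    have hu0' : ∀ i, (0:ℝ) ≤ u i := fun i => hu0 i
    have huopt : u ≤ xopt := by
      intro i
      simp only [hu, hz]
      rcases max_cases (x i) (xopt i) with ⟨h1, _⟩ | ⟨h1, _⟩ <;> rw [h1]
      · linarith [hopt0le i, hx0le i]
      · linarith [hx0le i]
    have huP : u ∈ P := hPdc xopt hoptP u hu0 huopt
    set M := l1 u with hM
    have hMnn : 0 ≤ M := l1_nonneg u
    have hxu : x + u = z := by funext i; simp [hu]
    have hzbox : z ∈ box n := by
      constructor
      · intro i; exact le_trans (hx0le i) (le_max_left _ _)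
      · intro i; exact max_le (hxbox.2 i) (hopt1le i)
    have hline : ∀ t ∈ Set.Icc (0:ℝ) 1, x + t • u ∈ box n := by
      intro t ht
      constructor
      · intro i
        have : 0 ≤ t * u i := mul_nonneg ht.1 (hu0 i)
        simpa using by linarith [hx0le i]
      · intro i
        have h1 : t * u i ≤ u i := by nlinarith [hu0' i, ht.2]
        have h2 : x i + u i ≤ 1 := by
          have := hzbox.2 i
          simp only [hu, Pi.one_apply] at *
          linarith
        simpa using by linarith
    have hl1line : ∀ t ∈ Set.Icc (0:ℝ) 1, l1 (x + t • u) = L + t * M := by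
      intro t ht
      have hnn : 0 ≤ x + t • u := fun i => by
        simpa using add_nonneg (hx0le i) (mul_nonneg ht.1 (hu0 i))
      rw [l1_eq_sum hnn, hL, hM, l1_eq_sum (fun i => hx0le i), l1_eq_sum hu0]
      simp only [Pi.add_apply, Pi.smul_apply, smul_eq_mul]
      rw [Finset.sum_add_distrib, Finset.mul_sum]
    set G : ℝ → ℝ := fun t => dotp u (grad F (x + t • u)) with hG
    set G' : ℝ → ℝ := fun t => quadForm (hess F (x + t • u)) u with hG'
    have hGder : ∀ t : ℝ, HasDerivAt G (G' t) t := fun t => hasDerivAt_G hF x u t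
    have hGcont : Continuous G :=
      continuous_iff_continuousAt.mpr fun t => (hGder t).continuousAt
    have hineq : ∀ t ∈ Set.Ioo (0:ℝ) 1, G' t ≤ 2*σ*M/(L+t*M) * G t := by
      intro t ht
      have htmem : t ∈ Set.Icc (0:ℝ) 1 := Set.mem_Icc_of_Ioo ht
      have hybox := hline t htmem
      have hl1y := hl1line t htmem
      have hy0 : x + t • u ≠ 0 := by
        intro h
        rw [h] at hl1y
        simp [l1] at hl1y
        nlinarith [mul_nonneg ht.1.le hMnn]
      have hoss := hOSS _ hybox hy0 u hu0
      rw [hl1y] at hoss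
      have heq : 2*σ*M/(L+t*M) * G t = 2 * (σ * (M / (L + t*M)) * G t) := by ring
      rw [heq]
      have := hoss
      simp only [hG', hG] at *
      linarith
    have hbound := gronwall_bound σ L M hLpos hMnn G G' (fun t _ => hGder t) hineq
    -- G 0 ≥ 0
    have hG0eq : G 0 = dotp u (grad F x) := by simp [hG]
    have hG0nn : 0 ≤ G 0 := by
      rw [hG0eq]
      apply Finset.sum_nonneg
      intro i _
      rcases (hu0' i).lt_or_eq with h | h
      · apply mul_nonneg (le_of_lt h)
        apply grad_nonneg_of_mono hFd hmono hxbox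
        have h1 : x i < z i := by simp only [hu] at h ⊢; linarith
        have h2 : z i ≤ 1 := hzbox.2 i
        linarith
      · rw [← h]; simp
    -- FTC
    have hFTC : F (x + u) - F x = ∫ t in (0:ℝ)..1, G t := by
      have := intervalIntegral.integral_eq_sub_of_hasDerivAt
        (f := fun t : ℝ => F (x + t • u)) (f' := G)
        (fun t _ => by simpa [hG] using hasDerivAt_F_line hFd x u t)
        (hGcont.intervalIntegrable 0 1)
      rw [this]
      norm_num
    set φ1 : ℝ := ((L + M)/L) ^ (2*σ) with hφ1
    have hφ1pos : 0 < φ1 := Real.rpow_pos_of_pos (div_pos (by linarith) hLpos) _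
    have hint : (∫ t in (0:ℝ)..1, G t) ≤ G 0 * φ1 := by
      have hmono' : ∀ t ∈ Set.Icc (0:ℝ) 1, G t ≤ G 0 * φ1 := by
        intro t ht
        refine le_trans (hbound t ht) ?_
        apply mul_le_mul_of_nonneg_left _ hG0nn
        apply Real.rpow_le_rpow
        · exact div_nonneg (by nlinarith [ht.1, ht.2]) hLpos.le
        · gcongr
          nlinarith [ht.2]
        · positivity
      calc (∫ t in (0:ℝ)..1, G t) ≤ ∫ _t in (0:ℝ)..1, G 0 * φ1 := by
            apply intervalIntegral.integral_mono_on zero_le_one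
              (hGcont.intervalIntegrable 0 1) (intervalIntegrable_const) hmono'
      _ = G 0 * φ1 := by simp
    have hkey : F xopt - F x ≤ G 0 * φ1 := by
      have h1 : F xopt ≤ F z := hmono xopt hoptbox z hzbox (fun i => le_max_right _ _)
      have h2 : F (x + u) - F x ≤ G 0 * φ1 := by rw [hFTC]; exact hint
      rw [hxu] at h2
      linarith
    -- the scaling inequality
    have hαM : α * M ≤ L := by
      have h1 : M ≤ l1 vstar := le_trans (l1_mono hu0 huopt) (hvmax xopt hoptP)
      have h2 : α * l1 vstar ≤ L := by
        have h3 : (0 : Fin n → ℝ) ≤ α • vstar := fun i => by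
          have := hvbox.1 i
          simpa using mul_nonneg hα0.le this
        have := l1_mono h3 hxge
        rw [l1_eq_sum h3] at this
        have h4 : ∑ i, (α • vstar) i = α * l1 vstar := by
          rw [l1_eq_sum (fun i => hvbox.1 i), Finset.mul_sum]
          simp [smul_eq_mul]
        rw [h4] at this
        exact this
      nlinarith [l1_nonneg vstar]
    have hratio : (α / (α + 1)) ^ (2*σ) * φ1 ≤ 1 := by
      rw [hφ1, ← Real.mul_rpow (by positivity) (by positivity)]
      apply Real.rpow_le_one (by positivity) _ (by positivity)
      rw [div_mul_div_comm]
      apply div_le_one_of_le₀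
      · nlinarith
      · positivity
    refine ⟨u, huP, ?_⟩
    have hd : 0 ≤ F xopt - F x := sub_nonneg.mpr (hopt x hxP)
    have hrnn : (0:ℝ) ≤ (α / (α + 1)) ^ (2*σ) := Real.rpow_nonneg (by positivity) _
    calc (α / (α + 1)) ^ (2*σ) * (F xopt - F x)
        ≤ (α / (α + 1)) ^ (2*σ) * (G 0 * φ1) := mul_le_mul_of_nonneg_left hkey hrnn
      _ = G 0 * ((α / (α + 1)) ^ (2*σ) * φ1) := by ring
      _ ≤ G 0 * 1 := mul_le_mul_of_nonneg_left hratio hG0nn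
      _ = dotp u (grad F x) := by rw [mul_one, hG0eq]
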